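/- Let n ≥ 1, a > 0, let ω₁,…,ωₙ > 0 be pairwise distinct with ωᵢ + ωⱼ ≠ ω_k for all distinct indices i, j, k, and let Π > 0 be such that ωᵢΠ ∈ 2π·ℤ_{>0} for every i. Let H be a symmetric real n×n matrix, θ* ∈ ℝⁿ, J* ∈ ℝ, and J(θ) := J* + (1/2)(θ − θ*)ᵀH(θ − θ*). Define S(τ) ∈ ℝⁿ by S_i(τ) := a sin(ωᵢτ). Then for every θ̃ ∈ ℝⁿ and every index i, (1/Π) ∫₀^Π J(θ̃ + θ* + S(τ)) · (2/a) sin(ωᵢτ) dτ = (H θ̃)_i. -/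
import Mathlib

noncomputable section
open Matrix intervalIntegral

lemma int_sin' (c P : ℝ) (h : ∃ m : ℤ, c * P = 2 * Real.pi * m) :
    ∫ τ in (0:ℝ)..P, Real.sin (c * τ) = 0 := by
  obtain ⟨m, hm⟩ := h
  rcases eq_or_ne c 0 with rfl | hc
  · simp
  · rw [intervalIntegral.integral_comp_mul_left (fun x => Real.sin x) hc]
    simp only [mul_zero, integral_sin]
    have : Real.cos (c * P) = 1 := by
      rw [hm]
      have := Real.cos_int_mul_two_pi m
      rw [show ((m:ℝ) * (2 * Real.pi)) = 2 * Real.pi * m by ring] at this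
      exact this
    simp [this]

lemma int_cos' (c P : ℝ) (hc : c ≠ 0) (h : ∃ m : ℤ, c * P = 2 * Real.pi * m) :
    ∫ τ in (0:ℝ)..P, Real.cos (c * τ) = 0 := by
  obtain ⟨m, hm⟩ := h
  rw [intervalIntegral.integral_comp_mul_left (fun x => Real.cos x) hc]
  simp only [mul_zero, integral_cos]
  have : Real.sin (c * P) = 0 := by
    rw [hm, show (2 * Real.pi * m : ℝ) = (2 * m : ℤ) * Real.pi by push_cast; ring]
    exact Real.sin_int_mul_pi _
  simp [this]

lemma sin_mul_sin' (x y : ℝ) :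
    Real.sin x * Real.sin y = Real.cos (x - y) / 2 - Real.cos (x + y) / 2 := by
  rw [Real.cos_sub, Real.cos_add]; ring

lemma int_sin_sin (b c P : ℝ) (hbc : b + c ≠ 0)
    (hb : ∃ m : ℤ, b * P = 2 * Real.pi * m) (hc : ∃ m : ℤ, c * P = 2 * Real.pi * m) :
    ∫ τ in (0:ℝ)..P, Real.sin (b * τ) * Real.sin (c * τ) =
      if b = c then P / 2 else 0 := by
  obtain ⟨mb, hmb⟩ := hb; obtain ⟨mc, hmc⟩ := hc
  have h1 : (fun τ => Real.sin (b * τ) * Real.sin (c * τ)) =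
      fun τ => Real.cos ((b - c) * τ) / 2 - Real.cos ((b + c) * τ) / 2 := by
    funext τ
    rw [sin_mul_sin', show b * τ - c * τ = (b - c) * τ by ring,
      show b * τ + c * τ = (b + c) * τ by ring]
  have ic : ∀ e : ℝ, IntervalIntegrable (fun τ => Real.cos (e * τ) / 2) MeasureTheory.volume (0:ℝ) P :=
    fun e => (Continuous.intervalIntegrable (by fun_prop) _ _)
  rw [h1, intervalIntegral.integral_sub (ic _) (ic _),
    intervalIntegral.integral_div, intervalIntegral.integral_div]
  have h2 : ∫ τ in (0:ℝ)..P, Real.cos ((b + c) * τ) = 0 :=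
    int_cos' _ _ hbc ⟨mb + mc, by push_cast; rw [add_mul, hmb, hmc]; ring⟩
  rw [h2]
  rcases eq_or_ne b c with rfl | hne
  · simp
  · rw [if_neg hne, int_cos' _ _ (sub_ne_zero.mpr hne)
      ⟨mb - mc, by push_cast; rw [sub_mul, hmb, hmc]; ring⟩]
    ring

set_option maxHeartbeats 1000000 in
lemma int_sin3 (b c d P : ℝ)
    (hb : ∃ m : ℤ, b * P = 2 * Real.pi * m) (hc : ∃ m : ℤ, c * P = 2 * Real.pi * m)
    (hd : ∃ m : ℤ, d * P = 2 * Real.pi * m) :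
    ∫ τ in (0:ℝ)..P, Real.sin (b * τ) * Real.sin (c * τ) * Real.sin (d * τ) = 0 := by
  obtain ⟨mb, hmb⟩ := hb; obtain ⟨mc, hmc⟩ := hc; obtain ⟨md, hmd⟩ := hd
  have h1 : (fun τ => Real.sin (b * τ) * Real.sin (c * τ) * Real.sin (d * τ)) =
      fun τ => (Real.sin ((d + b - c) * τ) + Real.sin ((d - b + c) * τ)
        - Real.sin ((d + b + c) * τ) - Real.sin ((d - b - c) * τ)) / 4 := by
    funext τ
    rw [show (d + b - c) * τ = (d*τ + b*τ) - c*τ by ring,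
      show (d - b + c) * τ = (d*τ - b*τ) + c*τ by ring,
      show (d + b + c) * τ = (d*τ + b*τ) + c*τ by ring,
      show (d - b - c) * τ = (d*τ - b*τ) - c*τ by ring]
    simp only [Real.sin_sub, Real.sin_add, Real.cos_add, Real.cos_sub]
    ring
  rw [h1]
  simp only [sub_div, add_div]
  rw [intervalIntegral.integral_sub, intervalIntegral.integral_sub, intervalIntegral.integral_add]
  · rw [intervalIntegral.integral_div, intervalIntegral.integral_div,
      intervalIntegral.integral_div, intervalIntegral.integral_div,
      int_sin' _ _ ⟨md + mb - mc, by push_cast; rw [sub_mul, add_mul, hmb, hmc, hmd]; ring⟩,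
      int_sin' _ _ ⟨md - mb + mc, by push_cast; rw [add_mul, sub_mul, hmb, hmc, hmd]; ring⟩,
      int_sin' _ _ ⟨md + mb + mc, by push_cast; rw [add_mul, add_mul, hmb, hmc, hmd]; ring⟩,
      int_sin' _ _ ⟨md - mb - mc, by push_cast; rw [sub_mul, sub_mul, hmb, hmc, hmd]; ring⟩]
    ring
  all_goals exact Continuous.intervalIntegrable (by fun_prop) _ _

/-- The quadratic objective `J(θ) = J* + ½(θ−θ*)ᵀH(θ−θ*)`. -/
def Jfun (n : ℕ) (H : Matrix (Fin n) (Fin n) ℝ) (θs : Fin n → ℝ) (Js : ℝ)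
    (θ : Fin n → ℝ) : ℝ :=
  Js + (1 / 2) * ((θ - θs) ⬝ᵥ (H *ᵥ (θ - θs)))

set_option maxHeartbeats 2000000 in
theorem stmt12 (n : ℕ) (hn : 1 ≤ n) (a : ℝ) (ha : 0 < a)
    (ω : Fin n → ℝ) (hω : ∀ i, 0 < ω i) (hωinj : Function.Injective ω)
    (hωsum : ∀ i j l : Fin n, i ≠ j → j ≠ l → i ≠ l → ω i + ω j ≠ ω l)
    (P : ℝ) (hP : 0 < P) (hper : ∀ i, ∃ m : ℕ, 0 < m ∧ ω i * P = 2 * Real.pi * m)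
    (H : Matrix (Fin n) (Fin n) ℝ) (hH : H.IsSymm)
    (θs : Fin n → ℝ) (Js : ℝ) :
    ∀ (θt : Fin n → ℝ) (i : Fin n),
      (1 / P) * ∫ τ in (0 : ℝ)..P,
          Jfun n H θs Js (θt + θs + fun j => a * Real.sin (ω j * τ)) *
            (2 / a * Real.sin (ω i * τ)) = (H *ᵥ θt) i := by
  intro θt i
  have ha' : a ≠ 0 := ne_of_gt ha
  have hP' : P ≠ 0 := ne_of_gt hP
  have per : ∀ j, ∃ m : ℤ, ω j * P = 2 * Real.pi * m := by
    intro j; obtain ⟨m, _, hm⟩ := hper j; exact ⟨m, by exact_mod_cast hm⟩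
  -- pointwise expansion of the integrand
  have hpt : ∀ τ : ℝ,
      Jfun n H θs Js (θt + θs + fun j => a * Real.sin (ω j * τ)) *
          (2 / a * Real.sin (ω i * τ))
      = 2 / a * Js * Real.sin (ω i * τ)
        + ∑ j, ∑ k, H j k *
            (1 / a * (θt j * θt k) * Real.sin (ω i * τ)
              + θt j * (Real.sin (ω k * τ) * Real.sin (ω i * τ))
              + θt k * (Real.sin (ω j * τ) * Real.sin (ω i * τ))
              + a * (Real.sin (ω j * τ) * Real.sin (ω k * τ) * Real.sin (ω i * τ))) := by
    intro τ
    simp only [Jfun, dotProduct, mulVec, Pi.add_apply, Pi.sub_apply]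
    rw [add_mul, Finset.mul_sum, Finset.sum_mul]
    congr 1
    · ring
    refine Finset.sum_congr rfl fun j _ => ?_
    rw [Finset.mul_sum, Finset.mul_sum, Finset.sum_mul]
    refine Finset.sum_congr rfl fun k _ => ?_
    field_simp
    ring
  have I1 : ∫ τ in (0:ℝ)..P, Real.sin (ω i * τ) = 0 := int_sin' _ _ (per i)
  have I2 : ∀ j k : Fin n, ∫ τ in (0:ℝ)..P, Real.sin (ω j * τ) * Real.sin (ω k * τ)
      = if j = k then P / 2 else 0 := by
    intro j k
    rw [int_sin_sin _ _ _ (ne_of_gt (add_pos (hω j) (hω k))) (per j) (per k)]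
    simp [hωinj.eq_iff]
  have I3 : ∀ j k : Fin n, ∫ τ in (0:ℝ)..P,
      Real.sin (ω j * τ) * Real.sin (ω k * τ) * Real.sin (ω i * τ) = 0 :=
    fun j k => int_sin3 _ _ _ _ (per j) (per k) (per i)
  -- integral of each (j,k) term
  have hint : ∀ j k : Fin n,
      (∫ τ in (0:ℝ)..P, H j k *
          (1 / a * (θt j * θt k) * Real.sin (ω i * τ)
            + θt j * (Real.sin (ω k * τ) * Real.sin (ω i * τ))
            + θt k * (Real.sin (ω j * τ) * Real.sin (ω i * τ))
            + a * (Real.sin (ω j * τ) * Real.sin (ω k * τ) * Real.sin (ω i * τ))))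
      = H j k * (θt j * (if k = i then P / 2 else 0)
          + θt k * (if j = i then P / 2 else 0)) := by
    intro j k
    rw [intervalIntegral.integral_const_mul]
    congr 1
    rw [intervalIntegral.integral_add (Continuous.intervalIntegrable (by fun_prop) _ _)
        (Continuous.intervalIntegrable (by fun_prop) _ _),
      intervalIntegral.integral_add (Continuous.intervalIntegrable (by fun_prop) _ _)
        (Continuous.intervalIntegrable (by fun_prop) _ _),
      intervalIntegral.integral_add (Continuous.intervalIntegrable (by fun_prop) _ _)
        (Continuous.intervalIntegrable (by fun_prop) _ _),
      intervalIntegral.integral_const_mul, intervalIntegral.integral_const_mul,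
      intervalIntegral.integral_const_mul, intervalIntegral.integral_const_mul,
      I1, I2, I2, I3]
    ring
  have hjint : ∀ j : Fin n,
      (∫ τ in (0:ℝ)..P, ∑ k, H j k *
          (1 / a * (θt j * θt k) * Real.sin (ω i * τ)
            + θt j * (Real.sin (ω k * τ) * Real.sin (ω i * τ))
            + θt k * (Real.sin (ω j * τ) * Real.sin (ω i * τ))
            + a * (Real.sin (ω j * τ) * Real.sin (ω k * τ) * Real.sin (ω i * τ))))
      = ∑ k, H j k * (θt j * (if k = i then P / 2 else 0)
          + θt k * (if j = i then P / 2 else 0)) := by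
    intro j
    rw [intervalIntegral.integral_finset_sum
      (fun k _ => Continuous.intervalIntegrable (by fun_prop) _ _)]
    exact Finset.sum_congr rfl fun k _ => hint j k
  simp only [hpt]
  rw [intervalIntegral.integral_add (Continuous.intervalIntegrable (by fun_prop) _ _)
      (Continuous.intervalIntegrable (by fun_prop) _ _),
    intervalIntegral.integral_const_mul, I1, mul_zero,
    intervalIntegral.integral_finset_sum
      (fun j _ => Continuous.intervalIntegrable (by fun_prop) _ _)]
  rw [Finset.sum_congr rfl fun j _ => hjint j]
  simp only [mul_add, Finset.sum_add_distrib, mul_ite, mul_zero, Finset.sum_ite_eq',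
    Finset.mem_univ, if_true, Finset.sum_ite_irrel, Finset.sum_const_zero]
  simp only [mulVec, dotProduct]
  rw [zero_add, Finset.mul_sum, Finset.mul_sum, ← Finset.sum_add_distrib]
  refine Finset.sum_congr rfl fun j _ => ?_
  rw [hH.apply i j]
  field_simp
  ring
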